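/- Let D ⊆ ℂ^d be a domain. Suppose that for every z₀ ∈ D and every exhaustion (Dₙ)_{n∈ℕ} of D with z₀ ∈ D₁, the associated functions γₙ converge to 0 pointwise on D. Then D has the Schwarz Property. -/

import Mathlib

open Filter Topology Metric

/-- `ℂ^d` with the Euclidean norm. -/
abbrev Cd (d : ℕ) := EuclideanSpace ℂ (Fin d)

variable {E : Type*} [NormedAddCommGroup E] [NormedSpace ℂ E]

/-- `supNorm f K = sup_{z ∈ K} |f z|`. -/
noncomputable def supNorm (f : E → ℂ) (K : Set E) : ℝ :=
  sSup ((fun z => ‖f z‖) '' K)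

/-- The series `∑ cₙ φₙ` converges to `f` uniformly on every compact subset of `D`. -/
def ExpandsTo (φ : ℕ → E → ℂ) (c : ℕ → ℂ) (f : E → ℂ) (D : Set E) : Prop :=
  ∀ K : Set E, K ⊆ D → IsCompact K →
    TendstoUniformlyOn (fun N z => ∑ n ∈ Finset.range N, c n * φ n z) f atTop K

/-- `φ` is a basis of the space of analytic functions on `D`: each `φₙ` is analytic on `D`
and every analytic function on `D` has a unique expansion converging uniformly on
compact subsets of `D`. -/
def IsBasisOn (φ : ℕ → E → ℂ) (D : Set E) : Prop :=
  (∀ n, DifferentiableOn ℂ (φ n) D) ∧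
    ∀ f : E → ℂ, DifferentiableOn ℂ f D → ∃! c : ℕ → ℂ, ExpandsTo φ c f D

/-- The Global Bohr Property of a basis `φ`, relative to `D`. -/
def HasGBP (φ : ℕ → E → ℂ) (D : Set E) : Prop :=
  ∀ K : Set E, K ⊆ D → IsCompact K →
    ∃ K₁ : Set E, K₁ ⊆ D ∧ IsCompact K₁ ∧ K ⊆ K₁ ∧
      ∀ (f : E → ℂ) (c : ℕ → ℂ), DifferentiableOn ℂ f D → ExpandsTo φ c f D →
        ∀ N : ℕ, ∑ n ∈ Finset.range N, ‖c n‖ * supNorm (φ n) K ≤ supNorm f K₁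

/-- Every bounded analytic function on `D` is constant. -/
def LiouvilleProperty (D : Set E) : Prop :=
  ∀ f : E → ℂ, DifferentiableOn ℂ f D → (∃ M : ℝ, ∀ z ∈ D, ‖f z‖ ≤ M) →
    ∀ z ∈ D, ∀ w ∈ D, f z = f w

/-- The Schwarz Property of a domain `D`. -/
def SchwarzProperty (D : Set E) : Prop :=
  ∀ z₀ ∈ D, ∀ K : Set E, K ⊆ D → IsCompact K → z₀ ∈ K → ∀ δ : ℝ, 0 < δ →
    ∃ K₁ : Set E, K₁ ⊆ D ∧ IsCompact K₁ ∧ K ⊆ K₁ ∧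
      ∀ (U : Set E) (f : E → ℂ), IsOpen U → K₁ ⊆ U → DifferentiableOn ℂ f U →
        supNorm (fun z => f z - f z₀) K ≤ δ * supNorm (fun z => f z - f z₀) K₁

/-- An exhaustion of `D` by relatively compact open sets. -/
def IsExhaustion (Dn : ℕ → Set E) (D : Set E) : Prop :=
  (∀ n, IsOpen (Dn n)) ∧ (∀ n, IsCompact (closure (Dn n))) ∧
    (∀ n, closure (Dn n) ⊆ Dn (n + 1)) ∧ (⋃ n, Dn n) = D

/-- `gammaFn U z₀ z = sup {|f z| : f analytic on U, f z₀ = 0, sup_U |f| ≤ 1}`. -/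
noncomputable def gammaFn (U : Set E) (z₀ z : E) : ℝ :=
  sSup {t : ℝ | ∃ f : E → ℂ, DifferentiableOn ℂ f U ∧ f z₀ = 0 ∧
    (∀ w ∈ U, ‖f w‖ ≤ 1) ∧ t = ‖f z‖}

/-!
Apply the hypothesis to an exhaustion whose first member contains `K`. By the Schwarz lemma on
complex lines, the `γₙ` are uniformly Lipschitz on `K` (a ball of fixed radius around each point
of `K` lies in every `Dₙ`), so their pointwise convergence to `0` is uniform on `K`. Once `γₙ ≤ δ`
on `K`, the set `K₁ = cl Dₙ` works, because `(f - f z₀) / sup_{K₁} |f - f z₀|` competes in the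
definition of `γₙ`.
-/

theorem dist_le_div_mul_dist_of_mapsTo_ball
    {F : Type*} [NormedAddCommGroup F] [NormedSpace ℂ F] {f : E → F} {c z : E} {R₁ R₂ : ℝ}
    (hd : DifferentiableOn ℂ f (ball c R₁))
    (h_maps : Set.MapsTo f (ball c R₁) (closedBall (f c) R₂)) (hz : z ∈ ball c R₁) :
    dist (f z) (f c) ≤ R₂ / R₁ * dist z c := by
  rcases eq_or_ne z c with rfl | hne
  · simp
  have hu : 0 < ‖z - c‖ := norm_pos_iff.2 (sub_ne_zero.2 hne)
  set line : ℂ → E := fun t => c + t • (z - c)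
  have hline : Set.MapsTo line (ball 0 (R₁ / ‖z - c‖)) (ball c R₁) := by
    intro t ht
    rw [mem_ball_zero_iff, lt_div_iff₀ hu] at ht
    simpa [line, norm_smul] using ht
  have hd' : DifferentiableOn ℂ (f ∘ line) (ball 0 (R₁ / ‖z - c‖)) :=
    hd.comp (by fun_prop) hline
  have h1 : (1 : ℂ) ∈ ball 0 (R₁ / ‖z - c‖) := by
    rw [mem_ball_zero_iff, norm_one, lt_div_iff₀ hu, one_mul, ← dist_eq_norm]
    exact hz
  have := Complex.dist_le_div_mul_dist_of_mapsTo_ball hd'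
    (by simpa [line] using h_maps.comp hline) h1
  simp only [Function.comp_apply, line, one_smul, add_sub_cancel, zero_smul, add_zero,
    dist_zero_right, norm_one, mul_one] at this
  rw [dist_eq_norm z c]
  calc dist (f z) (f c) ≤ R₂ / (R₁ / ‖z - c‖) := this
    _ = R₂ / R₁ * ‖z - c‖ := by field_simp

section SupNorm

variable {X : Type*}

theorem norm_le_supNorm [TopologicalSpace X] {f : X → ℂ} {K : Set X} (hK : IsCompact K)
    (hf : ContinuousOn f K) {z : X} (hz : z ∈ K) : ‖f z‖ ≤ supNorm f K :=
  le_csSup (hK.bddAbove_image hf.norm) (Set.mem_image_of_mem _ hz)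

theorem supNorm_nonneg (f : X → ℂ) (K : Set X) : 0 ≤ supNorm f K :=
  Real.sSup_nonneg (by rintro _ ⟨z, -, rfl⟩; exact norm_nonneg _)

theorem supNorm_le {f : X → ℂ} {K : Set X} {a : ℝ} (hK : K.Nonempty)
    (h : ∀ z ∈ K, ‖f z‖ ≤ a) : supNorm f K ≤ a :=
  csSup_le (hK.image _) (Set.forall_mem_image.2 h)

end SupNorm

theorem norm_le_gammaFn {U : Set E} {z₀ z : E} (hz : z ∈ U) {f : E → ℂ}
    (hf : DifferentiableOn ℂ f U) (hf₀ : f z₀ = 0) (hf₁ : ∀ w ∈ U, ‖f w‖ ≤ 1) :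
    ‖f z‖ ≤ gammaFn U z₀ z :=
  le_csSup ⟨1, by rintro t ⟨g, -, -, hg₁, rfl⟩; exact hg₁ z hz⟩ ⟨f, hf, hf₀, hf₁, rfl⟩

theorem gammaFn_le {U : Set E} {z₀ z : E} {a : ℝ}
    (h : ∀ f : E → ℂ, DifferentiableOn ℂ f U → f z₀ = 0 → (∀ w ∈ U, ‖f w‖ ≤ 1) → ‖f z‖ ≤ a) :
    gammaFn U z₀ z ≤ a :=
  csSup_le ⟨0, 0, differentiableOn_const 0, rfl, by simp, by simp⟩
    fun _ ⟨f, hf, hf₀, hf₁, ht⟩ => ht ▸ h f hf hf₀ hf₁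

theorem norm_le_gammaFn_mul {U : Set E} {z₀ z : E} (hz : z ∈ U) {f : E → ℂ} {M : ℝ}
    (hf : DifferentiableOn ℂ f U) (hf₀ : f z₀ = 0) (hfM : ∀ w ∈ U, ‖f w‖ ≤ M) :
    ‖f z‖ ≤ gammaFn U z₀ z * M := by
  rcases (norm_nonneg _).trans (hfM z hz) |>.eq_or_lt with rfl | hM
  · simpa using hfM z hz
  have hnorm : ∀ w, ‖f w * (M : ℂ)⁻¹‖ = ‖f w‖ / M := fun w => by
    rw [norm_mul, norm_inv, Complex.norm_real, Real.norm_of_nonneg hM.le, div_eq_mul_inv]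
  have key := norm_le_gammaFn (z₀ := z₀) hz (hf.mul_const (M : ℂ)⁻¹) (by simp [hf₀])
    fun w hw => (hnorm w).trans_le ((div_le_one hM).2 (hfM w hw))
  rwa [hnorm, div_le_iff₀ hM] at key

theorem gammaFn_le_gammaFn_add {U : Set E} {z₀ z w : E} {r : ℝ} (hU : ball w r ⊆ U)
    (hz : z ∈ ball w r) : gammaFn U z₀ z ≤ gammaFn U z₀ w + 2 / r * dist z w := by
  have hw : w ∈ U := hU (mem_ball_self (pos_of_mem_ball hz))
  refine gammaFn_le fun f hf hf₀ hf₁ => ?_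
  have hmaps : Set.MapsTo f (ball w r) (closedBall (f w) 2) := fun x hx => by
    rw [mem_closedBall, dist_eq_norm]
    linarith [norm_sub_le (f x) (f w), hf₁ x (hU hx), hf₁ w hw]
  calc ‖f z‖ ≤ ‖f w‖ + dist (f z) (f w) := by
        rw [dist_eq_norm]; exact norm_le_norm_add_norm_sub' ..
    _ ≤ gammaFn U z₀ w + 2 / r * dist z w :=
      add_le_add (norm_le_gammaFn hw hf hf₀ hf₁)
        (dist_le_div_mul_dist_of_mapsTo_ball (hf.mono hU) hmaps hz)

theorem eventually_forall_gammaFn_lt {U : ℕ → Set E} {K : Set E} {z₀ : E} {r ε : ℝ}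
    (hK : IsCompact K) (hr : 0 < r) (hball : ∀ x ∈ K, ∀ n, ball x r ⊆ U n)
    (hlim : ∀ x ∈ K, ∀ ε > 0, ∀ᶠ n in atTop, gammaFn (U n) z₀ x < ε) (hε : 0 < ε) :
    ∀ᶠ n in atTop, ∀ z ∈ K, gammaFn (U n) z₀ z < ε := by
  set η := min r (ε * r / 4)
  have hη : 0 < η := lt_min hr (by positivity)
  obtain ⟨T, hTK, hKT⟩ := hK.elim_nhds_subcover (fun x => ball x η) fun x _ => ball_mem_nhds x hη
  have hT : ∀ᶠ n in atTop, ∀ x ∈ T, gammaFn (U n) z₀ x < ε / 2 :=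
    (eventually_all_finset T).2 fun x hx => hlim x (hTK x hx) (ε / 2) (half_pos hε)
  filter_upwards [hT] with n hn z hz
  obtain ⟨x, hxT, hzx⟩ := Set.mem_iUnion₂.1 (hKT hz)
  calc gammaFn (U n) z₀ z ≤ gammaFn (U n) z₀ x + 2 / r * dist z x :=
        gammaFn_le_gammaFn_add (hball x (hTK x hxT) n) (ball_subset_ball (min_le_left _ _) hzx)
    _ < ε / 2 + 2 / r * (ε * r / 4) :=
        add_lt_add_of_lt_of_le (hn x hxT) <| mul_le_mul_of_nonneg_left
          ((mem_ball.1 hzx).le.trans (min_le_right _ _)) (by positivity)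
    _ = ε := by field_simp; ring

section Exhaustion

variable {X : Type*} [NormedAddCommGroup X]

namespace IsExhaustion

variable {Dn : ℕ → Set X} {D : Set X}

theorem monotone (h : IsExhaustion Dn D) : Monotone Dn :=
  monotone_nat_of_le_succ fun n => subset_closure.trans (h.2.2.1 n)

theorem closure_subset (h : IsExhaustion Dn D) (n : ℕ) : closure (Dn n) ⊆ D :=
  (h.2.2.1 n).trans (h.2.2.2 ▸ Set.subset_iUnion Dn (n + 1))

theorem shift (h : IsExhaustion Dn D) (N : ℕ) : IsExhaustion (fun n => Dn (n + N)) D :=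
  ⟨fun _ => h.1 _, fun _ => h.2.1 _, fun n => by simpa only [add_right_comm] using h.2.2.1 (n + N),
    (h.monotone.iSup_nat_add N).trans h.2.2.2⟩

end IsExhaustion

theorem exists_isExhaustion [ProperSpace X] {D : Set X} (hD : IsOpen D) :
    ∃ Dn : ℕ → Set X, IsExhaustion Dn D := by
  set Dn : ℕ → Set X := fun n => ball 0 (n + 1) ∩ (cthickening (1 / (n + 1)) Dᶜ)ᶜ
  have hclosure : ∀ n : ℕ,
      closure (Dn n) ⊆ closedBall 0 (n + 1) ∩ (thickening (1 / (n + 1)) Dᶜ)ᶜ :=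
    fun n => closure_minimal
      (Set.inter_subset_inter ball_subset_closedBall
        (Set.compl_subset_compl.2 (thickening_subset_cthickening _ _)))
      (isClosed_closedBall.inter isOpen_thickening.isClosed_compl)
  refine ⟨Dn, fun n => isOpen_ball.inter isClosed_cthickening.isOpen_compl,
    fun n => (isCompact_closedBall 0 _).of_isClosed_subset isClosed_closure
      ((hclosure n).trans Set.inter_subset_left),
    fun n => (hclosure n).trans (Set.inter_subset_inter (closedBall_subset_ball ?_)
      (Set.compl_subset_compl.2 (cthickening_subset_thickening' (by positivity) ?_ _))), ?_⟩
  · push_cast; linarith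
  · push_cast; gcongr; linarith
  refine (Set.iUnion_subset fun n => ?_).antisymm fun z hz => ?_
  · exact Set.inter_subset_right.trans (Set.compl_subset_comm.1 (self_subset_cthickening _))
  obtain ⟨δ, hδ, hzδ⟩ : ∃ δ > 0, z ∉ cthickening δ Dᶜ := by
    have hz' : z ∉ closure Dᶜ := by rwa [hD.isClosed_compl.closure_eq, Set.notMem_compl_iff]
    rw [closure_eq_iInter_cthickening] at hz'
    simpa only [Set.mem_iInter₂, not_forall, exists_prop] using hz'
  have hball : ∀ᶠ n : ℕ in atTop, ‖z‖ < n + 1 :=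
    (tendsto_natCast_atTop_atTop.eventually_gt_atTop ‖z‖).mono fun n hn => by linarith
  have hthick : ∀ᶠ n : ℕ in atTop, 1 / ((n : ℝ) + 1) < δ :=
    tendsto_one_div_add_atTop_nhds_zero_nat.eventually (gt_mem_nhds hδ)
  obtain ⟨n, hn₁, hn₂⟩ := (hball.and hthick).exists
  exact Set.mem_iUnion.2 ⟨n, mem_ball_zero_iff.2 hn₁, fun h => hzδ (cthickening_mono hn₂.le _ h)⟩

theorem IsCompact.exists_isExhaustion_of_subset [ProperSpace X] {K D : Set X} (hK : IsCompact K)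
    (hD : IsOpen D) (hKD : K ⊆ D) : ∃ Dn : ℕ → Set X, IsExhaustion Dn D ∧ K ⊆ Dn 0 := by
  obtain ⟨Dn, hDn⟩ := exists_isExhaustion hD
  obtain ⟨N, hN⟩ := hK.elim_directed_cover Dn hDn.1 (hDn.2.2.2 ▸ hKD) hDn.monotone.directed_le
  exact ⟨_, hDn.shift N, by simpa using hN⟩

end Exhaustion

theorem supNorm_le_mul_supNorm_closure {V K : Set E} {z₀ : E} {δ : ℝ} {g : E → ℂ}
    (hV : IsCompact (closure V)) (hKV : K ⊆ V) (hK : K.Nonempty)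
    (hγ : ∀ z ∈ K, gammaFn V z₀ z ≤ δ) (hg : DifferentiableOn ℂ g V)
    (hgc : ContinuousOn g (closure V)) (hg₀ : g z₀ = 0) :
    supNorm g K ≤ δ * supNorm g (closure V) :=
  supNorm_le hK fun z hz => calc
    ‖g z‖ ≤ gammaFn V z₀ z * supNorm g (closure V) :=
      norm_le_gammaFn_mul (hKV hz) hg hg₀ fun _ hw => norm_le_supNorm hV hgc (subset_closure hw)
    _ ≤ δ * supNorm g (closure V) := mul_le_mul_of_nonneg_right (hγ z hz) (supNorm_nonneg _ _)

theorem stmt12_general (d : ℕ) (D : Set (Cd d)) (hD : IsOpen D)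
    (hγ : ∀ z₀ ∈ D, ∀ Dn : ℕ → Set (Cd d), IsExhaustion Dn D → z₀ ∈ Dn 0 →
      ∀ z ∈ D, ∀ ε : ℝ, 0 < ε → ∃ N : ℕ, ∀ n : ℕ, N ≤ n →
        z ∈ Dn n ∧ gammaFn (Dn n) z₀ z < ε) :
    SchwarzProperty D := by
  intro z₀ hz₀ K hKD hK hz₀K δ hδ
  obtain ⟨Dn, hDn, hKDn⟩ := hK.exists_isExhaustion_of_subset hD hKD
  obtain ⟨r, hr, hKr⟩ := hK.exists_thickening_subset_open (hDn.1 0) hKDn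
  have hball : ∀ x ∈ K, ∀ n, ball x r ⊆ Dn n := fun x hx n =>
    (ball_subset_thickening hx r).trans (hKr.trans (hDn.monotone n.zero_le))
  have hlim : ∀ x ∈ K, ∀ ε > 0, ∀ᶠ n in atTop, gammaFn (Dn n) z₀ x < ε := fun x hx ε hε =>
    let ⟨N, hN⟩ := hγ z₀ hz₀ Dn hDn (hKDn hz₀K) x (hKD hx) ε hε
    eventually_atTop.2 ⟨N, fun n hn => (hN n hn).2⟩
  obtain ⟨n, hn⟩ := (eventually_forall_gammaFn_lt hK hr hball hlim hδ).exists
  have hKn : K ⊆ Dn n := hKDn.trans (hDn.monotone n.zero_le)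
  refine ⟨closure (Dn n), hDn.closure_subset n, hDn.2.1 n, hKn.trans subset_closure,
    fun U f _ hnU hf => ?_⟩
  exact supNorm_le_mul_supNorm_closure (hDn.2.1 n) hKn ⟨z₀, hz₀K⟩ (fun z hz => (hn z hz).le)
    ((hf.mono (subset_closure.trans hnU)).sub_const _)
    ((hf.continuousOn.mono hnU).sub continuousOn_const) (sub_self _)

/-- if for every `z₀ ∈ D` and every exhaustion `(Dₙ)` of `D` with
`z₀ ∈ D₁` the associated functions `γₙ` tend to `0` pointwise on `D`, then the domain
`D` has the Schwarz Property. -/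
theorem stmt12 (d : ℕ) (D : Set (Cd d)) (hD : IsOpen D) (hDconn : IsConnected D)
    (hγ : ∀ z₀ ∈ D, ∀ Dn : ℕ → Set (Cd d), IsExhaustion Dn D → z₀ ∈ Dn 0 →
      ∀ z ∈ D, ∀ ε : ℝ, 0 < ε → ∃ N : ℕ, ∀ n : ℕ, N ≤ n →
        z ∈ Dn n ∧ gammaFn (Dn n) z₀ z < ε) :
    SchwarzProperty D :=
  stmt12_general d D hD hγ
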